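/- In NSym^(l), the antipode satisfies apode(S_n) = Σ_{I ⊨ n} (-1)^{len(I)} S^I for every nonzero n ∈ N^l. -/

import Mathlib

open TensorProduct

/-- The level-`l` noncommutative symmetric functions: the free associative
`ℚ`-algebra on generators `S_n`, `n ∈ ℕ^l \ {0}`. -/
abbrev NSym (l : ℕ) : Type := FreeAlgebra ℚ {n : Fin l → ℕ // n ≠ 0}

/-- The complete homogeneous generators `S_n` (with `S_0 = 1`). -/
noncomputable def Sgen (l : ℕ) (n : Fin l → ℕ) : NSym l :=
  if h : n = 0 then 1 else FreeAlgebra.ι ℚ ⟨n, h⟩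

/-- `I` is a vector composition of `n ∈ ℕ^l`. -/
def IsVComp {l : ℕ} (n : Fin l → ℕ) (I : List (Fin l → ℕ)) : Prop :=
  (∀ v ∈ I, v ≠ 0) ∧ I.sum = n

/-!
Both `n ↦ apode (S_n)` and `n ↦ Σ_{I ⊨ n} (-1)^{len(I)} S^I` solve the recursion
`Σ_{i+j=n} S_i f(j) = 0` for `n ≠ 0`, `f(0) = 1`: the first by the antipode equation applied
to `S_n`, the second by splitting off the first part of a composition. Since `S_0 = 1`, this
recursion determines `f(n)` from the values `f(n - i)`, `0 ≠ i ≤ n`, so the two agree.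
-/

open Finset

theorem tsub_lt_self_of_mem_Icc_erase_zero {ι : Type*} [Fintype ι] [DecidableEq ι]
    {n i : ι → ℕ} (hi : i ∈ (Icc 0 n).erase 0) : n - i < n := by
  obtain ⟨hi0, -, hin⟩ := (mem_erase.trans (and_congr_right' mem_Icc)).mp hi
  refine tsub_le_self.lt_of_ne fun he => hi0 ?_
  have hcancel := tsub_add_cancel_of_le hin
  rw [he] at hcancel
  simpa using hcancel

theorem sum_Icc_mul_tsub_eq_add_sum_erase {ι R : Type*} [Fintype ι] [DecidableEq ι] [Semiring R]
    {s : (ι → ℕ) → R} (hs : s 0 = 1) (f : (ι → ℕ) → R) (n : ι → ℕ) :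
    ∑ i ∈ Icc 0 n, s i * f (n - i) = f n + ∑ i ∈ (Icc 0 n).erase 0, s i * f (n - i) := by
  rw [← add_sum_erase _ _ (mem_Icc.mpr ⟨le_rfl, zero_le⟩), hs, tsub_zero, one_mul]

theorem eq_of_sum_Icc_mul_eq_zero {ι R : Type*} [Fintype ι] [DecidableEq ι] [Ring R]
    {s f g : (ι → ℕ) → R} (hs : s 0 = 1) (h0 : f 0 = g 0)
    (hf : ∀ n ≠ 0, ∑ i ∈ Icc 0 n, s i * f (n - i) = 0)
    (hg : ∀ n ≠ 0, ∑ i ∈ Icc 0 n, s i * g (n - i) = 0) : f = g := by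
  funext n
  induction n using WellFoundedLT.induction with
  | _ n ih =>
    rcases eq_or_ne n 0 with rfl | hn
    · exact h0
    have htail : ∑ i ∈ (Icc 0 n).erase 0, s i * f (n - i) =
        ∑ i ∈ (Icc 0 n).erase 0, s i * g (n - i) :=
      sum_congr rfl fun i hi => by rw [ih _ (tsub_lt_self_of_mem_Icc_erase_zero hi)]
    have hfg := (hf n hn).trans (hg n hn).symm
    rw [sum_Icc_mul_tsub_eq_add_sum_erase hs, sum_Icc_mul_tsub_eq_add_sum_erase hs, htail] at hfg
    exact add_right_cancel hfg

section VectorCompositions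

variable {l : ℕ}

theorem isVComp_cons_iff {n j : Fin l → ℕ} {J : List (Fin l → ℕ)} :
    IsVComp n (j :: J) ↔ j ≠ 0 ∧ j ≤ n ∧ IsVComp (n - j) J := by
  simp only [IsVComp, List.mem_cons, forall_eq_or_imp, List.sum_cons]
  constructor
  · rintro ⟨⟨hj, hJ⟩, rfl⟩
    exact ⟨hj, le_add_right le_rfl, hJ, (add_tsub_cancel_left j J.sum).symm⟩
  · rintro ⟨hj, hjn, hJ, hsum⟩
    exact ⟨⟨hj, hJ⟩, by rw [hsum, add_tsub_cancel_of_le hjn]⟩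

theorem setOf_isVComp_zero : {I : List (Fin l → ℕ) | IsVComp 0 I} = {[]} := by
  ext (_ | ⟨j, J⟩)
  · simp [IsVComp]
  · simp only [Set.mem_ofPred_eq, isVComp_cons_iff, nonpos_iff_eq_zero, Set.mem_singleton_iff,
      reduceCtorEq, iff_false]
    exact fun ⟨hj, hj0, _⟩ => hj hj0

theorem setOf_isVComp_eq_biUnion {n : Fin l → ℕ} (hn : n ≠ 0) :
    {I | IsVComp n I} =
      ⋃ j ∈ (((Icc 0 n).erase 0 : Finset (Fin l → ℕ)) : Set (Fin l → ℕ)),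
        List.cons j '' {J | IsVComp (n - j) J} := by
  ext (_ | ⟨j, J⟩)
  · simp [IsVComp, Ne.symm hn]
  · simp only [Set.mem_ofPred_eq, isVComp_cons_iff, Set.mem_iUnion, Set.mem_image, mem_coe,
      mem_erase, mem_Icc, List.cons.injEq, exists_prop]
    constructor
    · rintro ⟨hj, hjn, hJ⟩
      exact ⟨j, ⟨hj, zero_le, hjn⟩, J, hJ, rfl, rfl⟩
    · rintro ⟨_, ⟨hj, -, hjn⟩, _, hJ, rfl, rfl⟩
      exact ⟨hj, hjn, hJ⟩

theorem finite_setOf_isVComp (n : Fin l → ℕ) : {I | IsVComp n I}.Finite := by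
  induction n using WellFoundedLT.induction with
  | _ n ih =>
    rcases eq_or_ne n 0 with rfl | hn
    · rw [setOf_isVComp_zero]
      exact Set.finite_singleton _
    rw [setOf_isVComp_eq_biUnion hn]
    exact (finite_toSet _).biUnion fun j hj =>
      (ih _ (tsub_lt_self_of_mem_Icc_erase_zero hj)).image _

end VectorCompositions

noncomputable def vcompSignedSum (l : ℕ) (n : Fin l → ℕ) : NSym l :=
  ∑ᶠ I ∈ {I | IsVComp n I}, ((-1 : ℚ) ^ I.length) • (I.map (Sgen l)).prod

section SignedSum

variable {l : ℕ}

theorem Sgen_zero : Sgen l 0 = 1 := dif_pos rfl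

theorem vcompSignedSum_zero : vcompSignedSum l 0 = 1 := by
  simp [vcompSignedSum, setOf_isVComp_zero]

theorem vcompSignedSum_eq_neg_sum {n : Fin l → ℕ} (hn : n ≠ 0) :
    vcompSignedSum l n = -∑ j ∈ (Icc 0 n).erase 0, Sgen l j * vcompSignedSum l (n - j) := by
  have hcons : ∀ j (J : List (Fin l → ℕ)),
      ((-1 : ℚ) ^ (j :: J).length) • ((j :: J).map (Sgen l)).prod =
        -Sgen l j * (((-1 : ℚ) ^ J.length) • (J.map (Sgen l)).prod) := fun j J => by
    rw [List.length_cons, pow_succ, mul_neg_one, neg_smul, List.map_cons, List.prod_cons,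
      mul_smul_comm, neg_mul, smul_neg]
  rw [vcompSignedSum, setOf_isVComp_eq_biUnion hn,
    finsum_mem_biUnion _ (finite_toSet _) fun j _ => (finite_setOf_isVComp _).image _,
    finsum_mem_coe_finset, ← sum_neg_distrib]
  · refine sum_congr rfl fun j _ => ?_
    rw [finsum_mem_image List.cons_injective.injOn, vcompSignedSum, ← neg_mul,
      mul_finsum_mem' _ _ (finite_setOf_isVComp _)]
    exact finsum_mem_congr rfl fun J _ => hcons j J
  · exact fun j _ k _ hjk => Set.disjoint_left.mpr fun _ ⟨_, _, hJ⟩ ⟨_, _, hK⟩ =>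
      hjk (List.cons_eq_cons.mp (hJ.trans hK.symm)).1

theorem sum_Icc_Sgen_mul_vcompSignedSum {n : Fin l → ℕ} (hn : n ≠ 0) :
    ∑ i ∈ Icc 0 n, Sgen l i * vcompSignedSum l (n - i) = 0 := by
  rw [sum_Icc_mul_tsub_eq_add_sum_erase Sgen_zero, vcompSignedSum_eq_neg_sum hn,
    neg_add_cancel]

end SignedSum

theorem apode_one_of_mul_map_id_comul {R A : Type*} [CommSemiring R] [Semiring A] [Algebra R A]
    {Δ : A →ₐ[R] A ⊗[R] A} {ε : A →ₐ[R] R} {apode : A →ₗ[R] A}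
    (hap : ∀ h : A, LinearMap.mul' R A (TensorProduct.map LinearMap.id apode (Δ h)) = ε h • 1) :
    apode 1 = 1 := by
  simpa [Algebra.TensorProduct.one_def] using hap 1

theorem sum_Icc_Sgen_mul_apode_Sgen {l : ℕ} {Δ : NSym l →ₐ[ℚ] NSym l ⊗[ℚ] NSym l}
    {ε : NSym l →ₐ[ℚ] ℚ} {apode : NSym l →ₗ[ℚ] NSym l}
    (hΔ : ∀ n : Fin l → ℕ,
      Δ (Sgen l n) = ∑ i ∈ Icc 0 n, Sgen l i ⊗ₜ[ℚ] Sgen l (n - i))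
    (hε : ∀ n : Fin l → ℕ, n ≠ 0 → ε (Sgen l n) = 0)
    (hap : ∀ h : NSym l,
      LinearMap.mul' ℚ (NSym l) (TensorProduct.map LinearMap.id apode (Δ h)) = ε h • 1)
    {n : Fin l → ℕ} (hn : n ≠ 0) :
    ∑ i ∈ Icc 0 n, Sgen l i * apode (Sgen l (n - i)) = 0 := by
  simpa [hΔ, hε n hn] using hap (Sgen l n)

theorem antipode_S_general {l : ℕ}
    (Δ : NSym l →ₐ[ℚ] NSym l ⊗[ℚ] NSym l)
    (hΔ : ∀ n : Fin l → ℕ,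
      Δ (Sgen l n) = ∑ i ∈ Finset.Icc 0 n, Sgen l i ⊗ₜ[ℚ] Sgen l (n - i))
    (ε : NSym l →ₐ[ℚ] ℚ)
    (hε : ∀ n : Fin l → ℕ, n ≠ 0 → ε (Sgen l n) = 0)
    (apode : NSym l →ₗ[ℚ] NSym l)
    (hap₂ : ∀ h : NSym l,
      LinearMap.mul' ℚ (NSym l)
        (TensorProduct.map (LinearMap.id : NSym l →ₗ[ℚ] NSym l) apode (Δ h))
        = ε h • 1) :
    ∀ n : Fin l → ℕ, n ≠ 0 →
      apode (Sgen l n) =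
        ∑ᶠ I ∈ {I : List (Fin l → ℕ) | IsVComp n I},
          ((-1 : ℚ) ^ I.length) • (I.map (Sgen l)).prod := by
  intro n _
  have hunique : (fun n => apode (Sgen l n)) = vcompSignedSum l :=
    eq_of_sum_Icc_mul_eq_zero Sgen_zero
      (by rw [Sgen_zero, apode_one_of_mul_map_id_comul hap₂, vcompSignedSum_zero])
      (fun _ hn => sum_Icc_Sgen_mul_apode_Sgen hΔ hε hap₂ hn)
      (fun _ hn => sum_Icc_Sgen_mul_vcompSignedSum hn)
  exact congrFun hunique n

/-- In `NSym^(l)` (free algebra on the `S_n` with coproduct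
`Δ(S_n) = Σ_{i+j=n} S_i ⊗ S_j`, counit `ε` killing the generators, antipode
the map satisfying the antipode equations), the antipode satisfies
`apode(S_n) = Σ_{I ⊨ n} (-1)^{len(I)} S^I` for every nonzero `n ∈ ℕ^l`. -/
theorem antipode_S {l : ℕ}
    (Δ : NSym l →ₐ[ℚ] NSym l ⊗[ℚ] NSym l)
    (hΔ : ∀ n : Fin l → ℕ,
      Δ (Sgen l n) = ∑ i ∈ Finset.Icc 0 n, Sgen l i ⊗ₜ[ℚ] Sgen l (n - i))
    (ε : NSym l →ₐ[ℚ] ℚ)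
    (hε : ∀ n : Fin l → ℕ, n ≠ 0 → ε (Sgen l n) = 0)
    (apode : NSym l →ₗ[ℚ] NSym l)
    (hap₁ : ∀ h : NSym l,
      LinearMap.mul' ℚ (NSym l)
        (TensorProduct.map apode (LinearMap.id : NSym l →ₗ[ℚ] NSym l) (Δ h))
        = ε h • 1)
    (hap₂ : ∀ h : NSym l,
      LinearMap.mul' ℚ (NSym l)
        (TensorProduct.map (LinearMap.id : NSym l →ₗ[ℚ] NSym l) apode (Δ h))
        = ε h • 1) :
    ∀ n : Fin l → ℕ, n ≠ 0 →
      apode (Sgen l n) =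
        ∑ᶠ I ∈ {I : List (Fin l → ℕ) | IsVComp n I},
          ((-1 : ℚ) ^ I.length) • (I.map (Sgen l)).prod :=
  antipode_S_general Δ hΔ ε hε apode hap₂
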